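/- Suppose q = r, r ∤ s, and 1 ≤ v_r(Δ) ≤ 2. Then v_r(α₀ − ζ^i β₀) = v_r(Δ)/(2r) for all 0 ≤ i ≤ r−1, and for all 0 ≤ j, k ≤ r−1 with j ≠ k one has v_r(γ_k − γ_j) = 1/(r−1) + v_r(Δ)/(2r). -/

import Mathlib

open Polynomial

/-- The unique valuation on an algebraic closure of `ℚ_r` extending the `r`-adic
valuation, normalized by `v r = 1`. -/
def IsExtVal (q : ℕ) [Fact q.Prime] {K : Type*} [Field K] [Algebra ℚ_[q] K]
    (v : K → WithTop ℚ) : Prop :=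
  (∀ x, v x = ⊤ ↔ x = 0) ∧
  (∀ x y, v (x * y) = v x + v y) ∧
  (∀ x y, min (v x) (v y) ≤ v (x + y)) ∧
  (∀ x : ℚ_[q], x ≠ 0 → v (algebraMap ℚ_[q] K x) = ((x.valuation : ℚ) : WithTop ℚ))

set_option linter.unusedSectionVars false


section Aux
variable {r : ℕ} [hrp : Fact r.Prime] {K : Type*} [Field K] [Algebra ℚ_[r] K]
  {v : K → WithTop ℚ} (hv : IsExtVal r v)
include hv

lemma ev_ne_top {x : K} (hx : x ≠ 0) : v x ≠ ⊤ := fun h => hx ((hv.1 x).1 h)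

lemma ev_rat {x : K} (hx : x ≠ 0) : ∃ q : ℚ, v x = (q : WithTop ℚ) := by
  cases h : v x with
  | top => exact absurd h (ev_ne_top hv hx)
  | coe q => exact ⟨q, rfl⟩

lemma ev_one : v 1 = 0 := by
  have := hv.2.2.2 1 one_ne_zero
  rw [map_one, Padic.valuation_one] at this; simpa using this

lemma ev_pow (x : K) (n : ℕ) : v (x ^ n) = n • v x := by
  induction n with
  | zero => simpa using ev_one hv
  | succ n ih => rw [pow_succ, hv.2.1, ih, succ_nsmul]

lemma ev_neg_one : v (-1 : K) = 0 := by
  obtain ⟨q, hq⟩ := ev_rat hv (neg_ne_zero.mpr (one_ne_zero (α := K)))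
  have h2 : v ((-1 : K) * (-1)) = v (-1) + v (-1) := hv.2.1 _ _
  rw [neg_mul_neg, one_mul, ev_one hv, hq, ← WithTop.coe_add] at h2
  have h3 : (0 : ℚ) = q + q := by exact_mod_cast h2
  have h4 : q = 0 := by linarith
  rw [hq, h4, WithTop.coe_zero]

lemma ev_neg (x : K) : v (-x) = v x := by
  have := hv.2.1 (-1) x
  rwa [neg_one_mul, ev_neg_one hv, zero_add] at this

lemma ev_sub_ge (x y : K) : min (v x) (v y) ≤ v (x - y) := by
  have := hv.2.2.1 x (-y)
  rwa [ev_neg hv, ← sub_eq_add_neg] at this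

lemma ev_add_lt {x y : K} (h : v x < v y) : v (x + y) = v x := by
  have h1 : v x ≤ v (x + y) := le_trans (le_of_eq (min_eq_left h.le).symm) (hv.2.2.1 x y)
  refine le_antisymm ?_ h1
  have h2 : min (v (x + y)) (v y) ≤ v x := by
    have h3 := hv.2.2.1 (x + y) (-y)
    rw [ev_neg hv, add_neg_cancel_right] at h3
    exact h3
  rcases min_le_iff.mp h2 with h3 | h3
  · exact h3
  · exact absurd h3 (not_le.mpr h)

lemma ev_add_eq_min {x y : K} (h : v x ≠ v y) : v (x + y) = min (v x) (v y) := by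
  rcases lt_or_gt_of_ne h with hlt | hlt
  · rw [ev_add_lt hv hlt, min_eq_left hlt.le]
  · rw [add_comm, ev_add_lt hv hlt, min_eq_right hlt.le]

lemma ev_sub_eq_min {x y : K} (h : v x ≠ v y) : v (x - y) = min (v x) (v y) := by
  rw [sub_eq_add_neg, ev_add_eq_min hv (by rwa [ev_neg hv]), ev_neg hv]

lemma ev_prod {ι : Type*} (s : Finset ι) (f : ι → K) :
    v (∏ i ∈ s, f i) = ∑ i ∈ s, v (f i) := by
  classical
  induction s using Finset.induction with
  | empty => simpa using ev_one hv
  | insert _ _ hni ih => rename_i a s'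
                         rw [Finset.prod_insert hni, Finset.sum_insert hni, hv.2.1, ih]

lemma ev_intCast {n : ℤ} (hn : n ≠ 0) :
    v ((n : K)) = ((padicValInt r n : ℚ) : WithTop ℚ) := by
  have h0 : ((n : ℚ_[r])) ≠ 0 := Int.cast_ne_zero.mpr hn
  have := hv.2.2.2 (n : ℚ_[r]) h0
  rw [map_intCast, Padic.valuation_intCast] at this
  exact_mod_cast this

lemma ev_r : v ((r : ℕ) : K) = ((1 : ℚ) : WithTop ℚ) := by
  have h0 : ((r : ℚ_[r])) ≠ 0 := Nat.cast_ne_zero.mpr hrp.out.ne_zero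
  have := hv.2.2.2 (r : ℚ_[r]) h0
  rw [map_natCast, Padic.valuation_p] at this
  exact_mod_cast this


omit hv in
lemma ev_coe_nsmul' (n : ℕ) (q : ℚ) : ((n • q : ℚ) : WithTop ℚ) = n • (q : WithTop ℚ) := by
  induction n with
  | zero => simp
  | succ m ih => rw [succ_nsmul, succ_nsmul, WithTop.coe_add, ih]

lemma ev_eq_zero_of_pow_eq_one {x : K} {n : ℕ} (hn : 0 < n) (hx : x ^ n = 1) : v x = 0 := by
  have hx0 : x ≠ 0 := by
    intro h; rw [h, zero_pow hn.ne'] at hx; exact zero_ne_one hx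
  obtain ⟨q, hq⟩ := ev_rat hv hx0
  have h1 : v (x ^ n) = n • v x := ev_pow hv x n
  rw [hx, ev_one hv, hq] at h1
  rw [← ev_coe_nsmul' n q] at h1
  have h2 : (0 : ℚ) = n • q := by exact_mod_cast h1
  have h3 : q = 0 := by
    have : (n : ℚ) * q = 0 := by rw [nsmul_eq_mul] at h2; linarith
    rcases mul_eq_zero.mp this with h | h
    · exact absurd h (by exact_mod_cast hn.ne')
    · exact h
  rw [hq, h3, WithTop.coe_zero]

lemma ev_nonneg_sum {ι : Type*} (s : Finset ι) (f : ι → K)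
    (h : ∀ i ∈ s, 0 ≤ v (f i)) : 0 ≤ v (∑ i ∈ s, f i) := by
  classical
  induction s using Finset.induction with
  | empty => rw [Finset.sum_empty, (hv.1 0).2 rfl]; exact le_top
  | insert _ _ hni ih =>
      rename_i a s'
      rw [Finset.sum_insert hni]
      refine le_trans ?_ (hv.2.2.1 _ _)
      rw [le_min_iff]
      exact ⟨h a (Finset.mem_insert_self a s'), ih (fun i hi => h i (Finset.mem_insert_of_mem hi))⟩

lemma ev_div_zero {x y : K} (hy : y ≠ 0) (hy0 : v y = 0) : v (x / y) = v x := by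
  have h := hv.2.1 (x / y) y
  rw [div_mul_cancel₀ _ hy, hy0, add_zero] at h
  exact h.symm

lemma ev_pow_inv {x : K} {n : ℕ} (hn : 0 < n) {c : ℚ}
    (h : v (x ^ n) = (((n : ℚ) * c : ℚ) : WithTop ℚ)) : v x = (c : WithTop ℚ) := by
  have hx : x ≠ 0 := by
    intro h0
    rw [h0, zero_pow hn.ne', (hv.1 0).2 rfl] at h
    exact (WithTop.coe_ne_top (a := ((n : ℚ) * c))) h.symm
  obtain ⟨q, hq⟩ := ev_rat hv hx
  rw [ev_pow hv, hq, ← ev_coe_nsmul'] at h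
  have h2 : (n • q : ℚ) = (n : ℚ) * c := by exact_mod_cast h
  rw [nsmul_eq_mul] at h2
  have h3 : q = c := mul_left_cancel₀ (Nat.cast_ne_zero.mpr hn.ne' : ((n:ℚ)) ≠ 0) h2
  rw [hq, h3]

section Zeta
variable {ζ : K} (hζ : IsPrimitiveRoot ζ r)

omit hv in
include hζ in
lemma prod_one_sub_zeta : ∏ i ∈ Finset.Ico 1 r, (1 - ζ ^ i) = (r : K) := by
  have hr0 : 0 < r := hrp.out.pos
  have e1 : (X ^ r - C (1:K)) = ∏ i ∈ Finset.range r, (X - C (ζ ^ i * 1)) :=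
    X_pow_sub_C_eq_prod hζ hr0 (one_pow r)
  have e2 : (X ^ r - 1 : K[X]) = (X - 1) * ∏ i ∈ Finset.Ico 1 r, (X - C (ζ ^ i)) := by
    rw [show ((1:K[X]) = C (1:K)) from (map_one C).symm, e1, Finset.range_eq_Ico,
      Finset.prod_eq_prod_Ico_succ_bot hr0]
    simp
  have e5 : (∑ i ∈ Finset.range r, (X:K[X]) ^ i) = ∏ i ∈ Finset.Ico 1 r, (X - C (ζ ^ i)) := by
    have hne : (X - 1 : K[X]) ≠ 0 := by simpa using X_sub_C_ne_zero (1:K)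
    apply mul_left_cancel₀ hne
    rw [← e2, mul_comm (X - 1 : K[X])]
    exact geom_sum_mul X r
  have h := congrArg (Polynomial.eval (1 : K)) e5
  simp only [eval_finset_sum, eval_pow, eval_X, one_pow, Finset.sum_const, Finset.card_range,
    nsmul_eq_mul, mul_one, eval_prod, eval_sub, eval_C] at h
  rw [← h]

include hζ in
lemma ev_zeta_pow_zero (n : ℕ) : v (ζ ^ n) = 0 := by
  have hr0 : 0 < r := hrp.out.pos
  refine ev_eq_zero_of_pow_eq_one hv hr0 ?_
  rw [← pow_mul, mul_comm, pow_mul, hζ.pow_eq_one, one_pow]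

include hζ in
lemma ev_one_sub_zeta_le {a b : ℕ} (ha : a ∈ Finset.Ico 1 r) (hb : b ∈ Finset.Ico 1 r) :
    v (1 - ζ ^ b) ≤ v (1 - ζ ^ a) := by
  have hr0 : 0 < r := hrp.out.pos
  obtain ⟨ha1, har⟩ := Finset.mem_Ico.mp ha
  obtain ⟨hb1, hbr⟩ := Finset.mem_Ico.mp hb
  haveI : NeZero r := ⟨hrp.out.ne_zero⟩
  have hbz : (b : ZMod r) ≠ 0 := by
    rw [Ne, ZMod.natCast_eq_zero_iff]
    exact Nat.not_dvd_of_pos_of_lt (by omega) hbr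
  set u : ZMod r := (a : ZMod r) * (b : ZMod r)⁻¹ with hu
  set k : ℕ := u.val with hk
  have hcast : ((b * k : ℕ) : ZMod r) = ((a : ℕ) : ZMod r) := by
    rw [Nat.cast_mul, hk, ZMod.natCast_rightInverse u, hu, mul_comm (a : ZMod r),
      ← mul_assoc, mul_inv_cancel₀ hbz, one_mul]
  have hpow : ζ ^ (b * k) = ζ ^ a := by
    have hm : b * k % orderOf ζ = a % orderOf ζ := by
      rw [← hζ.eq_orderOf]
      exact (ZMod.natCast_eq_natCast_iff _ _ _).mp hcast
    rw [← pow_mod_orderOf, hm, pow_mod_orderOf]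
  have hgeom : (1 : K) - ζ ^ a = (∑ t ∈ Finset.range k, (ζ ^ b) ^ t) * (1 - ζ ^ b) := by
    calc (1:K) - ζ ^ a = -((ζ^b)^k - 1) := by rw [← pow_mul, hpow]; ring
    _ = -((∑ t ∈ Finset.range k, (ζ ^ b) ^ t) * (ζ^b - 1)) := by rw [geom_sum_mul]
    _ = _ := by ring
  rw [hgeom, hv.2.1]
  have hges : 0 ≤ v (∑ t ∈ Finset.range k, (ζ ^ b) ^ t) := by
    refine ev_nonneg_sum hv _ _ (fun t _ => ?_)
    rw [← pow_mul]
    exact le_of_eq (ev_zeta_pow_zero hv hζ _).symm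
  exact le_add_of_nonneg_left hges

include hζ in
lemma ev_one_sub_zeta {a : ℕ} (ha : a ∈ Finset.Ico 1 r) :
    v (1 - ζ ^ a) = (((1 : ℚ) / ((r : ℚ) - 1) : ℚ) : WithTop ℚ) := by
  have hr1 : 1 < r := hrp.out.one_lt
  have heq : ∀ b ∈ Finset.Ico 1 r, v (1 - ζ ^ b) = v (1 - ζ ^ a) :=
    fun b hb => le_antisymm (ev_one_sub_zeta_le hv hζ ha hb) (ev_one_sub_zeta_le hv hζ hb ha)
  have hsum : ∑ b ∈ Finset.Ico 1 r, v (1 - ζ ^ b) = ((1 : ℚ) : WithTop ℚ) := by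
    rw [← ev_prod hv, prod_one_sub_zeta hζ]
    exact ev_r hv
  rw [Finset.sum_congr rfl heq, Finset.sum_const, Nat.card_Ico] at hsum
  have hne : (1 : K) - ζ ^ a ≠ 0 := by
    obtain ⟨ha1, har⟩ := Finset.mem_Ico.mp ha
    intro h
    exact hζ.pow_ne_one_of_pos_of_lt (by omega) har ((sub_eq_zero.mp h).symm)
  obtain ⟨q, hq⟩ := ev_rat hv hne
  rw [hq, ← ev_coe_nsmul'] at hsum
  have h2 : ((r - 1 : ℕ) • q : ℚ) = 1 := by exact_mod_cast hsum
  rw [nsmul_eq_mul] at h2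
  have hcast : ((r - 1 : ℕ) : ℚ) = (r : ℚ) - 1 := by
    push_cast [Nat.cast_sub hr1.le]
    ring
  rw [hcast] at h2
  have hr0 : (r : ℚ) - 1 ≠ 0 := by
    have : (1 : ℚ) < r := by exact_mod_cast hr1
    linarith
  have h3 : q = 1 / ((r : ℚ) - 1) := by field_simp; linarith [h2]
  rw [hq, h3]

include hζ in
lemma ev_zeta_pow_sub {i j : ℕ} (hi : i < r) (hj : j < r) (hij : i ≠ j) :
    v (ζ ^ i - ζ ^ j) = (((1 : ℚ) / ((r : ℚ) - 1) : ℚ) : WithTop ℚ) := by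
  have main : ∀ i j : ℕ, j < r → j < i → i < r →
      v (ζ ^ i - ζ ^ j) = (((1 : ℚ) / ((r : ℚ) - 1) : ℚ) : WithTop ℚ) := by
    intro i j hjr hji hir
    have e : ζ ^ i - ζ ^ j = -((1 - ζ ^ (i - j)) * ζ ^ j) := by
      have e2 : ζ ^ (i - j) * ζ ^ j = ζ ^ i := by
        rw [← pow_add]
        congr 1
        omega
      rw [sub_mul, one_mul, e2]
      ring
    rw [e, ev_neg hv, hv.2.1, ev_zeta_pow_zero hv hζ, add_zero,
      ev_one_sub_zeta hv hζ (Finset.mem_Ico.mpr ⟨by omega, by omega⟩)]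
  rcases lt_or_gt_of_ne hij with h | h
  · rw [← ev_neg hv, neg_sub]
    exact main j i hi h hj
  · exact main i j hj h hi

omit hv in
include hζ in
lemma zeta_zpow_reduce (a : ℤ) : ζ ^ a = ζ ^ ((a % (r : ℤ)).toNat) := by
  have hζ0 : ζ ≠ 0 := hζ.ne_zero hrp.out.ne_zero
  have hr0 : (0:ℤ) < (r:ℤ) := by exact_mod_cast hrp.out.pos
  have hdm : a = (r : ℤ) * (a / r) + a % r := (Int.mul_ediv_add_emod a r).symm
  have hnn : (0:ℤ) ≤ a % r := Int.emod_nonneg a hr0.ne'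
  calc ζ ^ a = ζ ^ ((r : ℤ) * (a / r) + a % r) := by rw [← hdm]
    _ = (ζ ^ (r : ℤ)) ^ (a / r) * ζ ^ (a % r) := by
        rw [zpow_add₀ hζ0, zpow_mul]
    _ = ζ ^ (a % r) := by
        rw [show ζ ^ (r:ℤ) = 1 by rw [zpow_natCast, hζ.pow_eq_one], one_zpow, one_mul]
    _ = ζ ^ ((a % (r : ℤ)).toNat) := by
        rw [← zpow_natCast, Int.toNat_of_nonneg hnn]

end Zeta
end Aux


set_option maxHeartbeats 1000000 in
/-- Theorem (cluster picture, case `q = r`, `r ∤ s`, `1 ≤ v_r(Δ) ≤ 2`):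
`v_r (α₀ − ζ^i β₀) = v_r(Δ)/(2r)` for all `0 ≤ i ≤ r − 1`, and for all
`0 ≤ j, k ≤ r − 1` with `j ≠ k`, `v_r (γ_k − γ_j) = 1/(r − 1) + v_r(Δ)/(2r)`. -/
theorem stmt_9 (r : ℕ) [Fact r.Prime] (hr5 : 5 ≤ r)
    {K : Type*} [Field K] [Algebra ℚ_[r] K] [IsAlgClosure ℚ_[r] K]
    (v : K → WithTop ℚ) (hv : IsExtVal r v)
    (ζ : K) (hζ : IsPrimitiveRoot ζ r)
    (z s : ℤ) (hz : z ≠ 0) (hΔ0 : (s ^ 2 - 4 * z ^ r : ℤ) ≠ 0)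
    (δ α₀ β₀ : K) (hδ : δ ^ 2 = ((s ^ 2 - 4 * z ^ r : ℤ) : K))
    (hα : α₀ ^ r = -(((s : K) + δ) / 2)) (hβ : β₀ ^ r = -(((s : K) - δ) / 2))
    (hαβ : α₀ * β₀ = (z : K))
    (γ : ℤ → K) (hγ : ∀ j : ℤ, γ j = ζ ^ j * α₀ + ζ ^ (-j) * β₀)
    (hrs : ¬ (r : ℤ) ∣ s)
    (h1 : 1 ≤ padicValInt r (s ^ 2 - 4 * z ^ r))
    (h2 : padicValInt r (s ^ 2 - 4 * z ^ r) ≤ 2) :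
    (∀ i : ℤ, 0 ≤ i → i < (r : ℤ) →
      v (α₀ - ζ ^ i * β₀)
        = (((padicValInt r (s ^ 2 - 4 * z ^ r) : ℚ) / (2 * (r : ℚ)) : ℚ) : WithTop ℚ)) ∧
    (∀ j k : ℤ, 0 ≤ j → j < (r : ℤ) → 0 ≤ k → k < (r : ℤ) → j ≠ k →
      v (γ k - γ j)
        = (((1 : ℚ) / ((r : ℚ) - 1)
            + (padicValInt r (s ^ 2 - 4 * z ^ r) : ℚ) / (2 * (r : ℚ)) : ℚ) : WithTop ℚ)) := by
  classical
  have hrP : r.Prime := Fact.out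
  have hr0 : 0 < r := hrP.pos
  have hr1 : 1 < r := hrP.one_lt
  haveI : CharZero K := charZero_of_injective_algebraMap (algebraMap ℚ_[r] K).injective
  set m : ℕ := padicValInt r (s ^ 2 - 4 * z ^ r) with hmdef
  have hζ0 : ζ ≠ 0 := hζ.ne_zero hr0.ne'
  have hβ0 : β₀ ≠ 0 := by
    intro h; rw [h, mul_zero] at hαβ; exact hz (by exact_mod_cast hαβ.symm)
  have hΔK : (((s ^ 2 - 4 * z ^ r : ℤ)) : K) ≠ 0 := Int.cast_ne_zero.mpr hΔ0
  have hδ0 : δ ≠ 0 := by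
    intro h; rw [h] at hδ; exact hΔK (by simpa using hδ.symm)
  have hvδ : v δ = (((m : ℚ) / 2 : ℚ) : WithTop ℚ) := by
    refine ev_pow_inv hv two_pos ?_
    rw [hδ, ev_intCast hv hΔ0]
    congr 1
    push_cast
    ring
  have hs0 : (s : ℤ) ≠ 0 := by rintro rfl; exact hrs (dvd_zero _)
  have hvs : v ((s : K)) = ((0 : ℚ) : WithTop ℚ) := by
    rw [ev_intCast hv hs0, padicValInt.eq_zero_of_not_dvd hrs]
    norm_num
  have hv2 : v (2 : K) = 0 := by
    have hnd : ¬ ((r : ℤ) ∣ 2) := by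
      intro h
      have := Int.le_of_dvd two_pos h
      omega
    rw [show ((2 : K)) = (((2 : ℤ)) : K) by norm_cast, ev_intCast hv two_ne_zero,
      padicValInt.eq_zero_of_not_dvd hnd]
    norm_num
  have hm1 : 1 ≤ m := h1
  have hm2 : m ≤ 2 := h2
  have hmq1 : (1 : ℚ) ≤ (m : ℚ) := by exact_mod_cast hm1
  have hmhalfpos : (0 : ℚ) < (m : ℚ) / 2 := by linarith
  have hvsne : v ((s : K)) ≠ v δ := by
    rw [hvs, hvδ]
    intro hcontr
    have : (0 : ℚ) = (m : ℚ) / 2 := by exact_mod_cast hcontr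
    linarith
  have hvsδ : v ((s : K) + δ) = ((0 : ℚ) : WithTop ℚ) := by
    rw [ev_add_eq_min hv hvsne, hvs, hvδ, ← WithTop.coe_min]
    congr 1
    exact min_eq_left hmhalfpos.le
  have hvsmδ : v ((s : K) - δ) = ((0 : ℚ) : WithTop ℚ) := by
    rw [ev_sub_eq_min hv hvsne, hvs, hvδ, ← WithTop.coe_min]
    congr 1
    exact min_eq_left hmhalfpos.le
  have hvα : v α₀ = ((0 : ℚ) : WithTop ℚ) := by
    refine ev_pow_inv hv hr0 ?_
    rw [hα, ev_neg hv, ev_div_zero hv two_ne_zero hv2, hvsδ]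
    congr 1
    ring
  have hvβ : v β₀ = ((0 : ℚ) : WithTop ℚ) := by
    refine ev_pow_inv hv hr0 ?_
    rw [hβ, ev_neg hv, ev_div_zero hv two_ne_zero hv2, hvsmδ]
    congr 1
    ring
  have hprod : ∏ i ∈ Finset.range r, (α₀ - ζ ^ i * β₀) = -δ := by
    have e := X_pow_sub_C_eq_prod hζ hr0 (rfl : β₀ ^ r = β₀ ^ r)
    have e2 := congrArg (Polynomial.eval α₀) e
    simp only [eval_sub, eval_pow, eval_X, eval_C, eval_prod] at e2
    rw [← e2, hα, hβ]
    ring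
  have hfne : ∀ i ∈ Finset.range r, α₀ - ζ ^ i * β₀ ≠ 0 := by
    have hne : ∏ i ∈ Finset.range r, (α₀ - ζ ^ i * β₀) ≠ 0 := by
      rw [hprod]; exact neg_ne_zero.mpr hδ0
    exact fun i hi h => hne (Finset.prod_eq_zero hi h)
  have hvsum : ∑ i ∈ Finset.range r, v (α₀ - ζ ^ i * β₀) = (((m : ℚ) / 2 : ℚ) : WithTop ℚ) := by
    rw [← ev_prod hv, hprod, ev_neg hv, hvδ]
  set Q : ℕ → ℚ := fun i => (v (α₀ - ζ ^ i * β₀)).untopD 0 with hQdef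
  have hQ : ∀ i ∈ Finset.range r, v (α₀ - ζ ^ i * β₀) = ((Q i : ℚ) : WithTop ℚ) := by
    intro i hi
    obtain ⟨q, hq⟩ := ev_rat hv (hfne i hi)
    rw [hQdef]
    simp only
    rw [hq, WithTop.untopD_coe]
  have hQsum : ∑ i ∈ Finset.range r, Q i = (m : ℚ) / 2 := by
    have hth := hvsum
    rw [Finset.sum_congr rfl hQ, ← WithTop.coe_sum] at hth
    exact_mod_cast hth
  have hQnn : ∀ i ∈ Finset.range r, 0 ≤ Q i := by
    intro i hi
    have h0 : (0 : WithTop ℚ) ≤ v (α₀ - ζ ^ i * β₀) := by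
      refine le_trans ?_ (ev_sub_ge hv _ _)
      rw [hvα, hv.2.1, ev_zeta_pow_zero hv hζ i, hvβ]
      norm_num
    rw [hQ i hi] at h0
    exact_mod_cast h0
  obtain ⟨i₀, hi₀, hmin⟩ := Finset.exists_min_image (Finset.range r) Q
    ⟨0, Finset.mem_range.mpr hr0⟩
  have hallQ : ∀ j ∈ Finset.range r, Q j = Q i₀ := by
    intro j hj
    by_cases hji : j = i₀
    · rw [hji]
    by_contra hne
    have hd2 := ev_sub_eq_min hv (show v (α₀ - ζ ^ j * β₀) ≠ v (α₀ - ζ ^ i₀ * β₀) by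
      rw [hQ j hj, hQ i₀ hi₀]
      exact fun hcontr => hne (by exact_mod_cast hcontr))
    have e : (α₀ - ζ ^ j * β₀) - (α₀ - ζ ^ i₀ * β₀) = (ζ ^ i₀ - ζ ^ j) * β₀ := by ring
    rw [e, hv.2.1, hvβ, ev_zeta_pow_sub hv hζ (Finset.mem_range.mp hi₀)
      (Finset.mem_range.mp hj) (Ne.symm hji), hQ j hj, hQ i₀ hi₀, ← WithTop.coe_min] at hd2
    have hd3 : (1 : ℚ) / ((r : ℚ) - 1) + 0 = min (Q j) (Q i₀) := by exact_mod_cast hd2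
    have hQi₀ : Q i₀ = 1 / ((r : ℚ) - 1) := by
      rw [min_eq_right (hmin j hj)] at hd3
      rw [← hd3]; ring
    have hsumlb : ∑ i ∈ Finset.range r, Q i₀ ≤ ∑ i ∈ Finset.range r, Q i :=
      Finset.sum_le_sum (fun i hi => hmin i hi)
    rw [Finset.sum_const, Finset.card_range, nsmul_eq_mul, hQi₀, hQsum, mul_one_div] at hsumlb
    have hrq : (5 : ℚ) ≤ (r : ℚ) := by exact_mod_cast hr5
    have hm2' : (m : ℚ) ≤ 2 := by exact_mod_cast hm2
    have hrm1 : (0 : ℚ) < (r : ℚ) - 1 := by linarith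
    have := (div_le_iff₀ hrm1).mp (le_trans hsumlb (by linarith : (m : ℚ) / 2 ≤ 1))
    linarith
  have hrq0 : ((r : ℚ)) ≠ 0 := by positivity
  have hQval : Q i₀ = (m : ℚ) / (2 * (r : ℚ)) := by
    have hsq : ∑ i ∈ Finset.range r, Q i = (r : ℚ) * Q i₀ := by
      rw [Finset.sum_congr rfl hallQ, Finset.sum_const, Finset.card_range, nsmul_eq_mul]
    rw [hQsum] at hsq
    field_simp
    linarith [hsq]
  have key : ∀ i ∈ Finset.range r,
      v (α₀ - ζ ^ i * β₀) = (((m : ℚ) / (2 * (r : ℚ)) : ℚ) : WithTop ℚ) := by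
    intro i hi
    rw [hQ i hi, hallQ i hi, hQval]
  constructor
  · intro i hi0 hir
    have hi' : i.toNat ∈ Finset.range r := Finset.mem_range.mpr (by omega)
    have hzp : ζ ^ i = ζ ^ (i.toNat) := by rw [← zpow_natCast, Int.toNat_of_nonneg hi0]
    rw [hzp]
    exact key _ hi'
  · intro j k hj0 hjr hk0 hkr hjk
    have e1 : ζ ^ (k : ℤ) * ζ ^ (-(j + k)) = ζ ^ (-j) := by
      rw [← zpow_add₀ hζ0]
      congr 1
      ring
    have e2 : ζ ^ (j : ℤ) * ζ ^ (-(j + k)) = ζ ^ (-k) := by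
      rw [← zpow_add₀ hζ0]
      congr 1
      ring
    have hid : γ k - γ j = (ζ ^ (k : ℤ) - ζ ^ (j : ℤ)) * (α₀ - ζ ^ (-(j + k)) * β₀) := by
      rw [hγ k, hγ j]
      linear_combination β₀ * e1 - β₀ * e2
    rw [hid, hv.2.1]
    have hkj : v (ζ ^ (k : ℤ) - ζ ^ (j : ℤ)) = (((1 : ℚ) / ((r : ℚ) - 1) : ℚ) : WithTop ℚ) := by
      rw [show ζ ^ (k : ℤ) = ζ ^ (k.toNat) by rw [← zpow_natCast, Int.toNat_of_nonneg hk0],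
          show ζ ^ (j : ℤ) = ζ ^ (j.toNat) by rw [← zpow_natCast, Int.toNat_of_nonneg hj0]]
      exact ev_zeta_pow_sub hv hζ (by omega) (by omega) (by omega)
    have hw : v (α₀ - ζ ^ (-(j + k)) * β₀) = (((m : ℚ) / (2 * (r : ℚ)) : ℚ) : WithTop ℚ) := by
      rw [zeta_zpow_reduce hζ (-(j + k))]
      apply key
      refine Finset.mem_range.mpr ?_
      have h5 := Int.emod_lt_of_pos (-(j + k)) (show (0 : ℤ) < (r : ℤ) by exact_mod_cast hr0)
      omega
    rw [hkj, hw, ← WithTop.coe_add]
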